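/- In the ring of formal power series ℚ⟦t⟧, one has (1−t)¹¹ · Σ_{k≥0} D(3,k) t^k = 1 + 4t + 10t² + 4t³ + t⁴; that is, the Poincaré series H₃(t) of Killing tensor dimensions on CP³ equals (1+4t+10t²+4t³+t⁴)/(1−t)¹¹. -/

import Mathlib

/-- f(n,p,q) = ((n+q−1)!·(n+p+q)!·(p+1)) / (q!·(p+q+1)!·(n−1)!·n!) as a rational number. -/
noncomputable def f (n p q : ℕ) : ℚ :=
  (((n + q - 1).factorial : ℚ) * ((n + p + q).factorial : ℚ) * ((p : ℚ) + 1)) /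
    ((q.factorial : ℚ) * ((p + q + 1).factorial : ℚ) * ((n - 1).factorial : ℚ) *
      (n.factorial : ℚ))

/-- S(n,k) = Σ f(n,p,q)² over all pairs (p,q) of nonnegative integers with p + 2q = k. -/
noncomputable def S (n k : ℕ) : ℚ :=
  ∑ pq ∈ (Finset.range (k + 1) ×ˢ Finset.range (k + 1)).filter
      (fun pq => pq.1 + 2 * pq.2 = k), (f n pq.1 pq.2) ^ 2

/-- D(n,k) = S(n,k) − S(n,k−1), with the convention S(n,−1) = 0. -/
noncomputable def D (n k : ℕ) : ℚ :=
  S n k - (if k = 0 then 0 else S n (k - 1))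



/-- closed form for partial sums. -/
noncomputable def Rc (x j : ℚ) : ℚ :=
  (1 : ℚ) + ((-5083 : ℚ)/6930) * j^1 + ((1121 : ℚ)/324) * j^3 + ((-4849 : ℚ)/2160) * j^5 + ((877 : ℚ)/1512) * j^7 + ((-83 : ℚ)/1296) * j^9 + ((1 : ℚ)/396) * j^11 + ((11 : ℚ)/3) * x^1 + ((-121 : ℚ)/90) * x^1 * j^1 + ((-1121 : ℚ)/216) * x^1 * j^2 + ((1961 : ℚ)/324) * x^1 * j^3 + ((4849 : ℚ)/864) * x^1 * j^4 + ((-1519 : ℚ)/540) * x^1 * j^5 + ((-877 : ℚ)/432) * x^1 * j^6 + ((25 : ℚ)/54) * x^1 * j^7 + ((83 : ℚ)/288) * x^1 * j^8 + ((-2 : ℚ)/81) * x^1 * j^9 + ((-1 : ℚ)/72) * x^1 * j^10 + ((193 : ℚ)/36) * x^2 + ((11173 : ℚ)/7560) * x^2 * j^1 + ((-1961 : ℚ)/216) * x^2 * j^2 + ((-989 : ℚ)/1296) * x^2 * j^3 + ((1519 : ℚ)/216) * x^2 * j^4 + ((1601 : ℚ)/1080) * x^2 * j^5 + ((-175 :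 ℚ)/108) * x^2 * j^6 + ((-80 : ℚ)/189) * x^2 * j^7 + ((1 : ℚ)/9) * x^2 * j^8 + ((41 : ℚ)/1296) * x^2 * j^9 + (4 : ℚ) * x^3 + ((2519 : ℚ)/630) * x^3 * j^1 + ((-965 : ℚ)/216) * x^3 * j^2 + ((-19 : ℚ)/4) * x^3 * j^3 + ((1183 : ℚ)/864) * x^3 * j^4 + ((39 : ℚ)/20) * x^3 * j^5 + ((59 : ℚ)/432) * x^3 * j^6 + ((-25 : ℚ)/126) * x^3 * j^7 + ((-11 : ℚ)/288) * x^3 * j^8 + ((29 : ℚ)/18) * x^4 + ((10469 : ℚ)/3780) * x^4 * j^1 + ((5 : ℚ)/54) * x^4 * j^2 + ((-211 : ℚ)/108) * x^4 * j^3 + ((-89 : ℚ)/108) * x^4 * j^4 + ((77 : ℚ)/360) * x^4 * j^5 + ((19 : ℚ)/108) * x^4 * j^6 + ((13 : ℚ)/504) * x^4 * j^7 + ((1 : ℚ)/3) * x^5 + ((4 : ℚ)/5) * x^5 * j^1 + ((59 : ℚ)/108) * x^5 * j^2 + ((-1 : ℚ)/18) * x^5 * j^3 + ((-11 : ℚ)/54)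 * x^5 * j^4 + ((-7 : ℚ)/90) * x^5 * j^5 + ((-1 : ℚ)/108) * x^5 * j^6 + ((1 : ℚ)/36) * x^6 + ((91 : ℚ)/1080) * x^6 * j^1 + ((7 : ℚ)/72) * x^6 * j^2 + ((23 : ℚ)/432) * x^6 * j^3 + ((1 : ℚ)/72) * x^6 * j^4 + ((1 : ℚ)/720) * x^6 * j^5

/-- the dimension polynomial D(3,k) = Pc(k). -/
noncomputable def Pc (x : ℚ) : ℚ :=
  (1 : ℚ) + ((581 : ℚ)/180) * x^1 + ((67 : ℚ)/15) * x^2 + ((11597 : ℚ)/3240) * x^3 + ((5291 : ℚ)/2835) * x^4 + ((5747 : ℚ)/8640) * x^5 + ((1417 : ℚ)/8640) * x^6 + ((119 : ℚ)/4320) * x^7 + ((13 : ℚ)/4320) * x^8 + ((1 : ℚ)/5184) * x^9 + ((1 : ℚ)/181440) * x^10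

lemma f_three (p q : ℕ) : f 3 p q =
    ((p:ℚ)+1)*((q:ℚ)+1)*((q:ℚ)+2)*((p:ℚ)+(q:ℚ)+2)*((p:ℚ)+(q:ℚ)+3)/12 := by
  have h1 : 3 + q - 1 = q + 1 + 1 := by omega
  have h2 : 3 + p + q = p + q + 1 + 1 + 1 := by omega
  have hq : ((q.factorial : ℚ)) ≠ 0 := Nat.cast_ne_zero.2 (Nat.factorial_ne_zero _)
  have hpq : (((p+q+1).factorial : ℚ)) ≠ 0 := Nat.cast_ne_zero.2 (Nat.factorial_ne_zero _)
  rw [f, h1, h2]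
  rw [Nat.factorial_succ (q+1), Nat.factorial_succ q,
    Nat.factorial_succ (p+q+1+1), Nat.factorial_succ (p+q+1)]
  norm_num [Nat.factorial]
  field_simp
  push_cast
  ring

lemma S_three (k : ℕ) : S 3 k =
    ∑ q ∈ Finset.range (k/2+1),
      (((k:ℚ)-2*(q:ℚ)+1)*((q:ℚ)+1)*((q:ℚ)+2)*((k:ℚ)-(q:ℚ)+2)*((k:ℚ)-(q:ℚ)+3)/12)^2 := by
  rw [S]
  refine Finset.sum_nbij' (fun pq => pq.2) (fun q => (k - 2*q, q)) ?_ ?_ ?_ ?_ ?_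
  · intro a ha
    simp only [Finset.mem_filter, Finset.mem_product, Finset.mem_range] at ha ⊢
    omega
  · intro a ha
    simp only [Finset.mem_range] at ha
    simp only [Finset.mem_filter, Finset.mem_product, Finset.mem_range]
    omega
  · intro a ha
    simp only [Finset.mem_filter, Finset.mem_product, Finset.mem_range] at ha
    have : k - 2 * a.2 = a.1 := by omega
    simp [this]
  · intro a ha; rfl
  · intro a ha
    simp only [Finset.mem_filter, Finset.mem_product, Finset.mem_range] at ha
    rw [f_three]
    have hc : (a.1 : ℚ) = (k:ℚ) - 2*(a.2:ℚ) := by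
      have := ha.2
      push_cast [← this]
      ring
    rw [hc]
    ring

lemma sum_G (x : ℚ) (j : ℕ) :
    ∑ q ∈ Finset.range (j+1),
      ((x-2*(q:ℚ)+1)*((q:ℚ)+1)*((q:ℚ)+2)*(x-(q:ℚ)+2)*(x-(q:ℚ)+3)/12)^2 = Rc x (j:ℚ) := by
  induction j with
  | zero =>
    simp only [zero_add, Finset.sum_range_one, Nat.cast_zero, Nat.cast_one]
    rw [Rc]
    push_cast
    ring
  | succ j ih =>
    rw [Finset.sum_range_succ, ih, Rc, Rc]
    push_cast
    ring

lemma S_val (k : ℕ) : S 3 k = Rc (k:ℚ) ((k/2 : ℕ) : ℚ) := by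
  rw [S_three, sum_G]

lemma D_val (k : ℕ) : D 3 k = Pc (k:ℚ) := by
  rcases Nat.even_or_odd k with ⟨m, hm⟩ | ⟨m, hm⟩
  · rcases m with _ | m
    · subst hm
      rw [D]
      norm_num [S_val, Rc, Pc]
    · have hk : k = 2*m + 2 := by omega
      subst hk
      rw [D]
      have e0 : ¬ (2*m+2 = 0) := by omega
      rw [if_neg e0]
      have e1 : 2*m+2-1 = 2*m+1 := by omega
      have e2 : (2*m+2)/2 = m+1 := by omega
      have e3 : (2*m+1)/2 = m := by omega
      rw [e1, S_val, S_val, e2, e3, Rc, Rc, Pc]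
      push_cast
      ring
  · subst hm
    rw [D]
    have e0 : ¬ (2*m+1 = 0) := by omega
    rw [if_neg e0]
    have e1 : 2*m+1-1 = 2*m := by omega
    have e2 : (2*m+1)/2 = m := by omega
    have e3 : (2*m)/2 = m := by omega
    rw [e1, S_val, S_val, e2, e3, Rc, Rc, Pc]
    push_cast
    ring

lemma fact_add_ten (m : ℕ) : ((m+10).factorial : ℚ) =
    (m.factorial : ℚ) * ((m:ℚ)+1)*((m:ℚ)+2)*((m:ℚ)+3)*((m:ℚ)+4)*((m:ℚ)+5)*((m:ℚ)+6)
      *((m:ℚ)+7)*((m:ℚ)+8)*((m:ℚ)+9)*((m:ℚ)+10) := by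
  have h : m + 10 = (((((((((m+1)+1)+1)+1)+1)+1)+1)+1)+1)+1 := by omega
  rw [h, Nat.factorial_succ, Nat.factorial_succ, Nat.factorial_succ, Nat.factorial_succ,
    Nat.factorial_succ, Nat.factorial_succ, Nat.factorial_succ, Nat.factorial_succ,
    Nat.factorial_succ, Nat.factorial_succ]
  push_cast
  ring

lemma choose_ten (m : ℕ) : (((10+m).choose 10 : ℕ) : ℚ) =
    ((m:ℚ)+1)*((m:ℚ)+2)*((m:ℚ)+3)*((m:ℚ)+4)*((m:ℚ)+5)*((m:ℚ)+6)
      *((m:ℚ)+7)*((m:ℚ)+8)*((m:ℚ)+9)*((m:ℚ)+10)/3628800 := by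
  rw [Nat.cast_add_choose]
  have h : 10 + m = m + 10 := by omega
  rw [h, fact_add_ten]
  have hm : ((m.factorial : ℕ) : ℚ) ≠ 0 := Nat.cast_ne_zero.2 (Nat.factorial_ne_zero _)
  have h10 : (((10:ℕ).factorial : ℕ) : ℚ) = 3628800 := by norm_num [Nat.factorial]
  rw [h10]
  field_simp

lemma key : PowerSeries.mk (fun k => D 3 k) =
    (1 + 4 * PowerSeries.X + 10 * PowerSeries.X ^ 2 + 4 * PowerSeries.X ^ 3
      + PowerSeries.X ^ 4 : PowerSeries ℚ)
      * PowerSeries.mk (fun n => (((10+n).choose 10 : ℕ) : ℚ)) := by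
  rw [show (1 + 4 * PowerSeries.X + 10 * PowerSeries.X ^ 2 + 4 * PowerSeries.X ^ 3
      + PowerSeries.X ^ 4 : PowerSeries ℚ)
      * PowerSeries.mk (fun n => (((10+n).choose 10 : ℕ) : ℚ))
      = PowerSeries.mk (fun n => (((10+n).choose 10 : ℕ) : ℚ))
        + PowerSeries.C (R := ℚ) 4 * (PowerSeries.mk (fun n => (((10+n).choose 10 : ℕ) : ℚ)) * PowerSeries.X ^ 1)
        + PowerSeries.C (R := ℚ) 10 * (PowerSeries.mk (fun n => (((10+n).choose 10 : ℕ) : ℚ)) * PowerSeries.X ^ 2)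
        + PowerSeries.C (R := ℚ) 4 * (PowerSeries.mk (fun n => (((10+n).choose 10 : ℕ) : ℚ)) * PowerSeries.X ^ 3)
        + PowerSeries.mk (fun n => (((10+n).choose 10 : ℕ) : ℚ)) * PowerSeries.X ^ 4 by
    simp only [map_ofNat]
    ring]
  ext n
  simp only [PowerSeries.coeff_mk, map_add, PowerSeries.coeff_C_mul,
    PowerSeries.coeff_mul_X_pow']
  rw [D_val]
  match n with
  | 0 => norm_num [Pc]
  | 1 => norm_num [Pc]
  | 2 =>
    have hc : Nat.choose 12 10 = 66 := by decide
    norm_num [Pc, hc]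
  | 3 =>
    have hc12 : Nat.choose 12 10 = 66 := by decide
    have hc13 : Nat.choose 13 10 = 286 := by decide
    norm_num [Pc, hc12, hc13]
  | (m+4) =>
    have h1 : 1 ≤ m + 4 := by omega
    have h2 : 2 ≤ m + 4 := by omega
    have h3 : 3 ≤ m + 4 := by omega
    have h4 : 4 ≤ m + 4 := by omega
    rw [if_pos h1, if_pos h2, if_pos h3, if_pos h4]
    have e1 : m + 4 - 1 = m + 3 := by omega
    have e2 : m + 4 - 2 = m + 2 := by omega
    have e3 : m + 4 - 3 = m + 1 := by omega
    have e4 : m + 4 - 4 = m := by omega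
    rw [e1, e2, e3, e4]
    have c0 := choose_ten (m+4)
    have c1 := choose_ten (m+3)
    have c2 := choose_ten (m+2)
    have c3 := choose_ten (m+1)
    have c4 := choose_ten m
    push_cast at c0 c1 c2 c3 c4 ⊢
    rw [show (10:ℕ)+((m:ℕ)+4) = 10+(m+4) from rfl]
    rw [c0, c1, c2, c3, c4, Pc]
    push_cast
    ring

/-- The Poincaré series H_3(t) = Σ_{k≥0} D(3,k) tᵏ of Killing tensor dimensions
on ℂℙ^3 satisfies (1−t)^11 · H_3(t) = 1 + 4t + 10t² + 4t³ + t⁴. -/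
theorem cpn_poincare_series_3 :
    ((1 - PowerSeries.X) ^ 11 : PowerSeries ℚ) * PowerSeries.mk (fun k => D 3 k)
      = 1 + 4 * PowerSeries.X + 10 * PowerSeries.X ^ 2 + 4 * PowerSeries.X ^ 3 + PowerSeries.X ^ 4 := by
  have h : PowerSeries.mk (fun n => (((10+n).choose 10 : ℕ) : ℚ))
      * ((1 - PowerSeries.X) ^ (10 + 1)) = 1 :=
    PowerSeries.mk_add_choose_mul_one_sub_pow_eq_one ℚ 10
  rw [key]
  have h11 : (11 : ℕ) = 10 + 1 := rfl
  rw [h11]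
  linear_combination (1 + 4 * PowerSeries.X + 10 * PowerSeries.X ^ 2 + 4 * PowerSeries.X ^ 3
      + PowerSeries.X ^ 4 : PowerSeries ℚ) * h
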